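/- arXiv:1912.04420 — 3 statements merged into one kernel-verified Lean document; each statement's English description precedes it below -/
import Mathlib

section
/- Let H be a separable Hilbert space and J a range function on X with values in closed subspaces of H. Then J is measurable in the weak sense (x ↦ ⟨P_J(x)u, v⟩ measurable for all u,v ∈ H, where P_J(x) is the orthogonal projection onto J(x)) if and only if there exists a sequence of measurable functions φ_k : X → H, k ≥ 1, such that J(x) = closure{ φ_k(x) : k ≥ 1 } for all x ∈ X. -/
/-!
Weak measurability gives measurability of `x ↦ ‖P_{J(x)} u‖² = re ⟪P_{J(x)} u, u⟫`, hence of the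
distances `x ↦ ‖P_{J(x)} u - c‖`, so each `x ↦ P_{J(x)} u` is Borel measurable; projecting a dense
sequence of `H` then gives selections whose values are dense in `J(x)`. Conversely, the
selections make `x ↦ infDist w (J x) = ⨅ k, dist w (φ k x)` measurable, Pythagoras turns this into
`⟪P_{J(x)} w, w⟫ = ‖w‖² - infDist w (J x)²`, and polarization recovers every `⟪P_{J(x)} u, v⟫`.
-/

open Metric Set
open scoped InnerProductSpace

theorem measurable_of_measurable_dist {α β : Type*} [MeasurableSpace α] [PseudoMetricSpace β]
    [MeasurableSpace β] [BorelSpace β] [SecondCountableTopology β] {f : α → β}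
    (hf : ∀ c, Measurable fun x => dist (f x) c) : Measurable f := by
  refine measurable_of_isOpen fun U hU => ?_
  let balls : Set (Set β) := {B | ∃ c r, B = ball c r ∧ B ⊆ U}
  obtain ⟨T, hT, hTballs, hTU⟩ := TopologicalSpace.isOpen_sUnion_countable balls
    (by rintro _ ⟨c, r, rfl, -⟩; exact isOpen_ball)
  have hU_eq : U = ⋃₀ T := by
    refine (Subset.antisymm (fun y hy => ?_) (sUnion_subset ?_)).trans hTU.symm
    · obtain ⟨r, hr, hrU⟩ := Metric.isOpen_iff.mp hU y hy
      exact ⟨ball y r, ⟨y, r, rfl, hrU⟩, mem_ball_self hr⟩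
    · rintro B ⟨_, _, _, hB⟩
      exact hB
  rw [hU_eq, preimage_sUnion]
  refine .biUnion hT fun B hB => ?_
  obtain ⟨c, r, rfl, -⟩ := hTballs hB
  exact measurableSet_lt (hf c) measurable_const

theorem measurable_of_measurable_inner_of_measurable_norm {𝕜 α E : Type*} [RCLike 𝕜]
    [MeasurableSpace α] [NormedAddCommGroup E] [InnerProductSpace 𝕜 E] [MeasurableSpace E]
    [BorelSpace E] [SecondCountableTopology E] {f : α → E}
    (hinner : ∀ c, Measurable fun x => ⟪f x, c⟫_𝕜) (hnorm : Measurable fun x => ‖f x‖) :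
    Measurable f := by
  refine measurable_of_measurable_dist fun c => ?_
  have hdist : (fun x => dist (f x) c) =
      fun x => √(‖f x‖ ^ 2 - 2 * RCLike.re ⟪f x, c⟫_𝕜 + ‖c‖ ^ 2) := by
    ext x
    rw [← norm_sub_sq (𝕜 := 𝕜), Real.sqrt_sq (norm_nonneg _), dist_eq_norm]
  rw [hdist]
  exact (((hnorm.pow_const 2).sub ((RCLike.measurable_re.comp (hinner c)).const_mul 2)).add_const
    _).sqrt

theorem measurable_inner_map_of_measurable_inner_map_self {α V : Type*} [MeasurableSpace α]
    [NormedAddCommGroup V] [InnerProductSpace ℂ V] {T : α → V →ₗ[ℂ] V}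
    (hT : ∀ w, Measurable fun x => ⟪T x w, w⟫_ℂ) (u v : V) :
    Measurable fun x => ⟪T x u, v⟫_ℂ := by
  simp only [inner_map_polarization' (T _) u v]
  fun_prop

theorem Metric.infDist_range_eq_iInf {ι : Sort*} {α : Type*} [PseudoMetricSpace α] (w : α)
    (f : ι → α) :
    infDist w (range f) = ⨅ k, dist w (f k) := by
  rw [infDist, infEDist, iInf_range, ENNReal.toReal_iInf fun _ => edist_ne_top _ _]
  simp [dist_edist]

namespace Submodule

variable {𝕜 E : Type*} [RCLike 𝕜] [NormedAddCommGroup E] [InnerProductSpace 𝕜 E]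
  (K : Submodule 𝕜 E) [K.HasOrthogonalProjection]

theorem norm_sub_starProjection_eq_infDist (w : E) :
    ‖w - K.starProjection w‖ = infDist w K := by
  rw [starProjection_minimal, infDist_eq_iInf]
  simp only [dist_eq_norm]
  rfl

theorem inner_starProjection_self (w : E) :
    ⟪K.starProjection w, w⟫_𝕜 = ((‖w‖ ^ 2 - infDist w K ^ 2 : ℝ) : 𝕜) := by
  have hpyth := K.norm_sq_eq_add_norm_sq_starProjection w
  rw [starProjection_orthogonal_val, norm_sub_starProjection_eq_infDist] at hpyth
  have hP : K.starProjection (K.starProjection w) = K.starProjection w :=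
    starProjection_eq_self_iff.mpr (K.starProjection_apply_mem w)
  rw [← hP, inner_starProjection_left_eq_right, inner_self_eq_norm_sq_to_K]
  norm_cast
  linarith

theorem isClosed_of_hasOrthogonalProjection : IsClosed (K : Set E) := by
  have hK : (K : Set E) = {v | K.starProjection v = v} := by
    ext v; exact starProjection_eq_self_iff.symm
  rw [hK]
  exact isClosed_eq K.starProjection.continuous continuous_id

theorem closure_range_starProjection_comp {ι : Type*} {e : ι → E} (he : DenseRange e) :
    closure (range fun k => K.starProjection (e k)) = K := by
  refine Subset.antisymm (closure_minimal ?_ K.isClosed_of_hasOrthogonalProjection) ?_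
  · rintro _ ⟨k, rfl⟩
    exact K.starProjection_apply_mem (e k)
  · intro v hv
    rw [← starProjection_eq_self_iff.mpr hv, range_comp']
    exact image_closure_subset_closure_image K.starProjection.continuous (mem_image_of_mem _ (he v))

end Submodule

section RangeFunction

variable {X E : Type*} [MeasurableSpace X] [NormedAddCommGroup E]

theorem measurable_starProjection_apply {𝕜 : Type*} [RCLike 𝕜] [InnerProductSpace 𝕜 E]
    [MeasurableSpace E] [BorelSpace E] [SecondCountableTopology E]
    {K : X → Submodule 𝕜 E} [∀ x, (K x).HasOrthogonalProjection]
    (hK : ∀ u v, Measurable fun x => ⟪(K x).starProjection u, v⟫_𝕜) (u : E) :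
    Measurable fun x => (K x).starProjection u := by
  refine measurable_of_measurable_inner_of_measurable_norm (hK u) ?_
  have hnorm : (fun x => ‖(K x).starProjection u‖) =
      fun x => √(RCLike.re ⟪(K x).starProjection u, u⟫_𝕜) := by
    ext x
    rw [Submodule.re_inner_starProjection_eq_normSq, Real.sqrt_sq (norm_nonneg _)]
    rfl
  rw [hnorm]
  exact (RCLike.measurable_re.comp (hK u u)).sqrt

theorem measurable_inner_starProjection_of_measurable_infDist [InnerProductSpace ℂ E]
    {K : X → Submodule ℂ E} [∀ x, (K x).HasOrthogonalProjection]
    (hK : ∀ w, Measurable fun x => infDist w (K x : Set E)) (u v : E) :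
    Measurable fun x => ⟪(K x).starProjection u, v⟫_ℂ := by
  refine measurable_inner_map_of_measurable_inner_map_self
    (T := fun x => ((K x).starProjection : E →ₗ[ℂ] E)) (fun w => ?_) u v
  simp only [ContinuousLinearMap.coe_coe, Submodule.inner_starProjection_self]
  fun_prop

end RangeFunction

theorem rangeFunction_measurable_iff_selections_general
    {X : Type*} [MeasurableSpace X]
    {H : Type*} [NormedAddCommGroup H] [InnerProductSpace ℂ H]
    [MeasurableSpace H] [BorelSpace H] [SecondCountableTopology H]
    (J : X → Submodule ℂ H) [∀ x, CompleteSpace ↥(J x)] :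
    (∀ u v : H, Measurable fun x => (inner ℂ (((J x).orthogonalProjectionOnto u : H)) v : ℂ))
      ↔ ∃ φ : ℕ → X → H, (∀ k, Measurable (φ k)) ∧
          ∀ x, (J x : Set H) = closure (Set.range fun k => φ k x) := by
  simp only [Submodule.coe_orthogonalProjectionOnto_apply]
  constructor
  · intro hJ
    obtain ⟨e, he⟩ := TopologicalSpace.exists_dense_seq H
    exact ⟨fun k x => (J x).starProjection (e k), fun k => measurable_starProjection_apply hJ (e k),
      fun x => ((J x).closure_range_starProjection_comp he).symm⟩
  · rintro ⟨φ, hφ, hJ⟩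
    refine measurable_inner_starProjection_of_measurable_infDist fun w => ?_
    simp_rw [hJ, infDist_closure, infDist_range_eq_iInf]
    exact .iInf fun k => measurable_const.dist (hφ k)

/-- a range function `J` on `X` with values in closed subspaces of a separable
Hilbert space `H` is weakly measurable (i.e. `x ↦ ⟨P_{J(x)}u, v⟩` is measurable for all
`u, v ∈ H`) if and only if there is a sequence of measurable functions `φ_k : X → H` with
`J(x) = closure {φ_k(x) : k ≥ 1}` for all `x`. -/
theorem rangeFunction_measurable_iff_selections
    {X : Type*} [MeasurableSpace X]
    {H : Type*} [NormedAddCommGroup H] [InnerProductSpace ℂ H] [CompleteSpace H]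
    [MeasurableSpace H] [BorelSpace H] [SecondCountableTopology H]
    (J : X → Submodule ℂ H) [∀ x, CompleteSpace ↥(J x)] :
    (∀ u v : H, Measurable fun x => (inner ℂ (((J x).orthogonalProjectionOnto u : H)) v : ℂ))
      ↔ ∃ φ : ℕ → X → H, (∀ k, Measurable (φ k)) ∧
          ∀ x, (J x : Set H) = closure (Set.range fun k => φ k x) :=
  rangeFunction_measurable_iff_selections_general J
end

section
/- Let T = ∫⊕_X R(x) dμ(x) : V_J → V_{J'} be a decomposable operator and C > 0. Then ‖Tφ‖ ≥ C‖φ‖ for all φ ∈ V_J if and only if for a.e. x ∈ X, ‖R(x)v‖ ≥ C‖v‖ for all v ∈ J(x). -/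
/-! The projections `x ↦ P_{J x} (d n)` of a dense sequence `d n` of `H` are dense in every fibre,
so it suffices to prove the fibrewise bound a.e. along each of these countably many sections. If
it failed along one of them on a set of positive measure, the section cut down to a piece `E` of
that set of finite positive measure would be some `φ ∈ V_J` with `‖Tφ‖ < C‖φ‖`. That these
sections and their images under `R` are measurable follows from the weak measurability hypotheses
by Pettis' theorem for separable Hilbert spaces. The converse is the pointwise bound integrated. -/

open MeasureTheory
open scoped ENNReal

noncomputable section

/-- The multiplication-invariant subspace `V_J ⊆ L²(X;H)` determined by a range
function `J`. -/
def VJ {X : Type*} [MeasurableSpace X] (μ : Measure X)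
    {H : Type*} [NormedAddCommGroup H] [InnerProductSpace ℂ H]
    (J : X → Submodule ℂ H) : Submodule ℂ (Lp H 2 μ) where
  carrier := {φ | ∀ᵐ x ∂μ, φ x ∈ J x}
  add_mem' := by
    intro a b ha hb
    simp only [Set.mem_setOf_eq] at ha hb ⊢
    filter_upwards [Lp.coeFn_add a b, ha, hb] with x h1 h2 h3
    rw [h1]
    exact (J x).add_mem h2 h3
  zero_mem' := by
    filter_upwards [Lp.coeFn_zero H 2 μ] with x h1
    rw [h1]
    exact (J x).zero_mem
  smul_mem' := by
    intro c f hf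
    show ∀ᵐ x ∂μ, (c • f : Lp H 2 μ) x ∈ J x
    filter_upwards [Lp.coeFn_smul c f, hf] with x h1 h2
    rw [h1]
    exact (J x).smul_mem c h2

section WeakMeasurability

variable {X : Type*} [MeasurableSpace X] {𝕜 E : Type*} [RCLike 𝕜] [NormedAddCommGroup E]
  [InnerProductSpace 𝕜 E]

lemma norm_sq_eq_iSup_of_denseRange {d : ℕ → E} (hd : DenseRange d) (w : E) :
    ‖w‖ ^ 2 = ⨆ k, (2 * RCLike.re (inner 𝕜 w (d k)) - ‖d k‖ ^ 2) := by
  have hterm : ∀ k, 2 * RCLike.re (inner 𝕜 w (d k)) - ‖d k‖ ^ 2 = ‖w‖ ^ 2 - ‖w - d k‖ ^ 2 :=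
    fun k => by rw [@norm_sub_sq 𝕜]; ring
  have hle : ∀ k, ‖w‖ ^ 2 - ‖w - d k‖ ^ 2 ≤ ‖w‖ ^ 2 := fun k => by nlinarith [norm_nonneg (w - d k)]
  simp_rw [hterm]
  refine le_antisymm (le_of_forall_pos_le_add fun ε hε => ?_) (ciSup_le hle)
  obtain ⟨k, hk⟩ := Metric.denseRange_iff.1 hd w (√ε) (Real.sqrt_pos.2 hε)
  have hk' : ‖w - d k‖ ^ 2 < ε := by
    rw [← dist_eq_norm]
    calc dist w (d k) ^ 2 < √ε ^ 2 := by gcongr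
      _ = ε := Real.sq_sqrt hε.le
  calc ‖w‖ ^ 2 ≤ (‖w‖ ^ 2 - ‖w - d k‖ ^ 2) + ε := by linarith
    _ ≤ (⨆ k, (‖w‖ ^ 2 - ‖w - d k‖ ^ 2)) + ε := by
      gcongr
      exact le_ciSup ⟨_, Set.forall_mem_range.2 hle⟩ k

variable [TopologicalSpace.SeparableSpace E]

lemma measurable_norm_of_measurable_inner {f : X → E}
    (hf : ∀ v, Measurable fun x => inner 𝕜 (f x) v) : Measurable fun x => ‖f x‖ := by
  have : Nonempty E := ⟨0⟩
  obtain ⟨d, hd⟩ := TopologicalSpace.exists_dense_seq E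
  have hsq : Measurable fun x => ‖f x‖ ^ 2 := by
    rw [funext fun x => norm_sq_eq_iSup_of_denseRange (𝕜 := 𝕜) hd (f x)]
    exact .iSup fun k => ((RCLike.measurable_re.comp (hf (d k))).const_mul 2).sub_const _
  simpa using hsq.sqrt

lemma stronglyMeasurable_of_measurable_inner {f : X → E}
    (hf : ∀ v, Measurable fun x => inner 𝕜 (f x) v) : StronglyMeasurable f := by
  borelize E
  have : SecondCountableTopology E := UniformSpace.secondCountable_of_separable E
  have hball : ∀ c r, MeasurableSet (f ⁻¹' Metric.ball c r) := fun c r => by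
    have : Measurable fun x => ‖f x - c‖ := measurable_norm_of_measurable_inner (𝕜 := 𝕜)
      fun v => by simpa only [inner_sub_left] using (hf v).sub_const _
    simpa [Metric.ball, dist_eq_norm] using measurableSet_lt this measurable_const
  refine (measurable_of_isOpen fun U hU => ?_).stronglyMeasurable
  choose r hr hrU using Metric.isOpen_iff.1 hU
  obtain ⟨T, hT, hTU⟩ := TopologicalSpace.isOpen_iUnion_countable
    (fun y : U => Metric.ball (y : E) (r y y.2)) fun _ => Metric.isOpen_ball
  have hU_eq : U = ⋃ y : U, Metric.ball (y : E) (r y y.2) := by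
    refine subset_antisymm (fun y hy => ?_) (Set.iUnion_subset fun y => hrU y y.2)
    exact Set.mem_iUnion.2 ⟨⟨y, hy⟩, Metric.mem_ball_self (hr y hy)⟩
  rw [hU_eq, ← hTU, Set.preimage_iUnion₂]
  exact .biUnion hT fun y _ => hball _ _

end WeakMeasurability

namespace MeasureTheory.Lp

variable {α E F : Type*} [MeasurableSpace α] {μ : Measure α} [NormedAddCommGroup E]
  [NormedAddCommGroup F] {p : ℝ≥0∞}

lemma norm_lt_norm_of_ae_le_of_frequently_lt (hp0 : p ≠ 0) (hp : p ≠ ∞) {f : Lp E p μ}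
    {g : Lp F p μ} (hle : ∀ᵐ x ∂μ, ‖f x‖ ≤ ‖g x‖) (hlt : ∃ᵐ x ∂μ, ‖f x‖ < ‖g x‖) :
    ‖f‖ < ‖g‖ := by
  have hp' : 0 < p.toReal := ENNReal.toReal_pos hp0 hp
  rw [norm_def, norm_def]
  refine ENNReal.toReal_strict_mono (eLpNorm_ne_top g) ?_
  rw [eLpNorm_eq_lintegral_rpow_enorm_toReal hp0 hp, eLpNorm_eq_lintegral_rpow_enorm_toReal hp0 hp]
  refine ENNReal.rpow_lt_rpow (lintegral_strict_mono_of_ae_le_of_frequently_ae_lt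
    ((Lp.aestronglyMeasurable g).enorm.pow_const _)
    (lintegral_rpow_enorm_lt_top_of_eLpNorm_lt_top hp0 hp (eLpNorm_lt_top f)).ne
    (hle.mono fun x hx => ?_) (hlt.mono fun x hx => ?_)) (by positivity)
  · exact ENNReal.rpow_le_rpow (enorm_le_iff_norm_le.2 hx) hp'.le
  · refine (ENNReal.rpow_lt_rpow ?_ hp').ne
    simpa only [← ofReal_norm] using (ENNReal.ofReal_lt_ofReal_iff_of_nonneg (norm_nonneg _)).2 hx

end MeasureTheory.Lp

lemma Submodule.denseRange_orthogonalProjectionOnto_comp {𝕜 E ι : Type*} [RCLike 𝕜]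
    [NormedAddCommGroup E] [InnerProductSpace 𝕜 E] (K : Submodule 𝕜 E) [K.HasOrthogonalProjection]
    {d : ι → E} (hd : DenseRange d) : DenseRange fun i => K.orthogonalProjectionOnto (d i) := by
  have hsurj : Function.Surjective K.orthogonalProjectionOnto := fun v =>
    ⟨v, K.orthogonalProjectionOnto_mem_subspace_eq_self v⟩
  exact hsurj.denseRange.comp hd K.orthogonalProjectionOnto.continuous

section DecomposableOperator

variable {X : Type*} [MeasurableSpace X] {μ : Measure X}
  {H H' : Type*} [NormedAddCommGroup H] [InnerProductSpace ℂ H]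
  [NormedAddCommGroup H'] [InnerProductSpace ℂ H'] {J : X → Submodule ℂ H} {J' : X → Submodule ℂ H'}

lemma exists_VJ_ae_eq_indicator (s : (x : X) → J x) (hs : StronglyMeasurable fun x => (s x : H))
    {M : ℝ} (hM : ∀ x, ‖s x‖ ≤ M) {E : Set X} (hE : MeasurableSet E) (hμE : μ E ≠ ∞) :
    ∃ φ : VJ μ J, (φ : Lp H 2 μ) =ᵐ[μ] E.indicator fun x => (s x : H) := by
  have : IsFiniteMeasure (μ.restrict E) := isFiniteMeasure_restrict.2 hμE
  have hmem : MemLp (E.indicator fun x => (s x : H)) 2 μ :=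
    (memLp_indicator_iff_restrict hE).2 (.of_bound hs.aestronglyMeasurable M (ae_of_all _ hM))
  refine ⟨⟨hmem.toLp _, ?_⟩, hmem.coeFn_toLp⟩
  filter_upwards [hmem.coeFn_toLp] with x hx
  by_cases hxE : x ∈ E <;> simp [hx, hxE]

lemma ae_const_mul_norm_section_le_of_bounded_below [SigmaFinite μ] {R : (x : X) → J x →L[ℂ] J' x}
    {T : VJ μ J →L[ℂ] VJ μ J'}
    (hT : ∀ φ : VJ μ J, ∀ᵐ x ∂μ, ∀ hx : (φ : Lp H 2 μ) x ∈ J x,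
      ((T φ : Lp H' 2 μ) x) = (R x ⟨(φ : Lp H 2 μ) x, hx⟩ : H'))
    {C : ℝ} (hC : 0 ≤ C) (hbelow : ∀ φ, C * ‖φ‖ ≤ ‖T φ‖)
    (s : (x : X) → J x) (hs : StronglyMeasurable fun x => (s x : H)) {M : ℝ} (hM : ∀ x, ‖s x‖ ≤ M)
    (hRs : Measurable fun x => ‖R x (s x)‖) :
    ∀ᵐ x ∂μ, C * ‖s x‖ ≤ ‖R x (s x)‖ := by
  by_contra hbad
  have hB : μ {x | ‖R x (s x)‖ < C * ‖s x‖} ≠ 0 := by simpa [ae_iff] using hbad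
  obtain ⟨E, hE, hEB, hEpos, hEfin⟩ := Measure.exists_subset_measure_lt_top
    (measurableSet_lt hRs (hs.norm.measurable.const_mul C)) (pos_iff_ne_zero.2 hB)
  obtain ⟨φ, hφ⟩ := exists_VJ_ae_eq_indicator s hs hM hE hEfin.ne
  have hcmp : ∀ᵐ x ∂μ, ‖(T φ : Lp H' 2 μ) x‖ ≤ ‖(C • (φ : Lp H 2 μ)) x‖ ∧
      (x ∈ E → ‖(T φ : Lp H' 2 μ) x‖ < ‖(C • (φ : Lp H 2 μ)) x‖) := by
    filter_upwards [hT φ, hφ, Lp.coeFn_smul C (φ : Lp H 2 μ)] with x hTx hφx hCφx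
    have hTφx : ∀ v : J x, (φ : Lp H 2 μ) x = v → (T φ : Lp H' 2 μ) x = R x v := fun v hv =>
      (hTx (hv ▸ v.2)).trans (congrArg (fun w => (R x w : H')) (Subtype.ext hv))
    rw [hCφx, Pi.smul_apply, norm_smul, Real.norm_of_nonneg hC]
    by_cases hx : x ∈ E
    · rw [Set.indicator_of_mem hx] at hφx
      rw [hTφx _ hφx, hφx]
      exact ⟨(hEB hx).le, fun _ => hEB hx⟩
    · rw [Set.indicator_of_notMem hx] at hφx
      rw [hTφx 0 hφx, hφx]
      simp [hx]
  have hlt : ‖T φ‖ < C * ‖φ‖ := by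
    calc ‖T φ‖ < ‖C • (φ : Lp H 2 μ)‖ := Lp.norm_lt_norm_of_ae_le_of_frequently_lt two_ne_zero
          ENNReal.ofNat_ne_top (hcmp.mono fun x hx => hx.1)
          (((frequently_ae_mem_iff.2 hEpos.ne').and_eventually hcmp).mono fun x hx => hx.2.2 hx.1)
      _ = C * ‖φ‖ := by rw [norm_smul, Real.norm_of_nonneg hC]; rfl
  exact (hbelow φ).not_gt hlt

end DecomposableOperator

theorem decomposable_bounded_below_iff_general
    {X : Type*} [MeasurableSpace X] (μ : Measure X) [SigmaFinite μ]
    {H H' : Type*} [NormedAddCommGroup H] [InnerProductSpace ℂ H]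
    [SecondCountableTopology H]
    [NormedAddCommGroup H'] [InnerProductSpace ℂ H']
    [SecondCountableTopology H']
    (J : X → Submodule ℂ H) (J' : X → Submodule ℂ H')
    [∀ x, CompleteSpace ↥(J x)]
    (hJm : ∀ u v : H, Measurable fun x => (inner ℂ (((J x).orthogonalProjectionOnto u : H)) v : ℂ))
    (R : (x : X) → (↥(J x) →L[ℂ] ↥(J' x)))
    (hRm : ∀ (u : H) (v : H'),
      Measurable fun x => (inner ℂ ((R x ((J x).orthogonalProjectionOnto u) : H')) v : ℂ))
    (T : ↥(VJ μ J) →L[ℂ] ↥(VJ μ J'))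
    (hT : ∀ φ : ↥(VJ μ J), ∀ᵐ x ∂μ, ∀ hx : (φ : Lp H 2 μ) x ∈ J x,
      ((T φ : Lp H' 2 μ) x) = (R x ⟨(φ : Lp H 2 μ) x, hx⟩ : H'))
    (C : ℝ) (hC : 0 < C) :
    (∀ φ : ↥(VJ μ J), C * ‖φ‖ ≤ ‖T φ‖) ↔
      (∀ᵐ x ∂μ, ∀ v : ↥(J x), C * ‖v‖ ≤ ‖R x v‖) := by
  constructor
  · intro hbelow
    have : Nonempty H := ⟨0⟩
    obtain ⟨d, hd⟩ := TopologicalSpace.exists_dense_seq H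
    have hsec : ∀ n, ∀ᵐ x ∂μ, C * ‖(J x).orthogonalProjectionOnto (d n)‖ ≤
        ‖R x ((J x).orthogonalProjectionOnto (d n))‖ := fun n =>
      ae_const_mul_norm_section_le_of_bounded_below hT hC.le hbelow _
        (stronglyMeasurable_of_measurable_inner (hJm (d n)))
        (fun x => (J x).norm_orthogonalProjectionOnto_apply_le (d n))
        (measurable_norm_of_measurable_inner (hRm (d n)))
    filter_upwards [ae_all_iff.2 hsec] with x hx v
    exact ((J x).denseRange_orthogonalProjectionOnto_comp hd).induction_on v
      (isClosed_le (by fun_prop) (by fun_prop)) hx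
  · intro hR φ
    refine (le_inv_mul_iff₀ hC).1
      (Lp.norm_le_mul_norm_of_ae_le_mul (f := (φ : Lp H 2 μ)) (g := (T φ : Lp H' 2 μ)) ?_)
    filter_upwards [hT φ, φ.2, hR] with x hTx hφx hRx
    rw [le_inv_mul_iff₀ hC, hTx hφx]
    exact hRx ⟨_, hφx⟩

/-- a decomposable operator `T = ∫⊕ R(x) dμ(x) : V_J → V_{J'}` is bounded
below by `C > 0` if and only if for a.e. `x ∈ X` the fiber `R(x)` is bounded below by `C`
on `J(x)`. -/
theorem decomposable_bounded_below_iff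
    {X : Type*} [MeasurableSpace X] (μ : Measure X) [SigmaFinite μ]
    [TopologicalSpace.SeparableSpace (Lp ℂ 2 μ)]
    {H H' : Type*} [NormedAddCommGroup H] [InnerProductSpace ℂ H] [CompleteSpace H]
    [SecondCountableTopology H]
    [NormedAddCommGroup H'] [InnerProductSpace ℂ H'] [CompleteSpace H']
    [SecondCountableTopology H']
    (J : X → Submodule ℂ H) (J' : X → Submodule ℂ H')
    [∀ x, CompleteSpace ↥(J x)] [∀ x, CompleteSpace ↥(J' x)]
    (hJm : ∀ u v : H, Measurable fun x => (inner ℂ (((J x).orthogonalProjectionOnto u : H)) v : ℂ))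
    (hJ'm : ∀ u v : H', Measurable fun x => (inner ℂ (((J' x).orthogonalProjectionOnto u : H')) v : ℂ))
    (R : (x : X) → (↥(J x) →L[ℂ] ↥(J' x)))
    (hRm : ∀ (u : H) (v : H'),
      Measurable fun x => (inner ℂ ((R x ((J x).orthogonalProjectionOnto u) : H')) v : ℂ))
    (hRb : ∃ C, ∀ᵐ x ∂μ, ‖R x‖ ≤ C)
    (T : ↥(VJ μ J) →L[ℂ] ↥(VJ μ J'))
    (hT : ∀ φ : ↥(VJ μ J), ∀ᵐ x ∂μ, ∀ hx : (φ : Lp H 2 μ) x ∈ J x,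
      ((T φ : Lp H' 2 μ) x) = (R x ⟨(φ : Lp H 2 μ) x, hx⟩ : H'))
    (C : ℝ) (hC : 0 < C) :
    (∀ φ : ↥(VJ μ J), C * ‖φ‖ ≤ ‖T φ‖) ↔
      (∀ᵐ x ∂μ, ∀ v : ↥(J x), C * ‖v‖ ≤ ‖R x v‖) :=
  decomposable_bounded_below_iff_general μ J J' hJm R hRm T hT C hC
end
end

section
/- Let π : G → U(H) be a unitary representation of a second-countable locally compact group G, and let {u_i}_{i∈I} be a countable sequence in H such that {π(x)u_i}_{x∈G, i∈I} is a complete Bessel system. Then in the polar decomposition T = UP of the analysis operator T : H → L²(G × I), (Tv)(x,i) = ⟨v, π(x)u_i⟩, the partial isometry U is a linear isometry onto the closure of ran T that intertwines π with left translation, i.e., Uπ(y) = L_y U for all y ∈ G. -/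
open MeasureTheory

theorem aux_count_sfinite {I : Type*} [Countable I] [MeasurableSpace I] :
    SFinite (Measure.count : Measure I) := by
  rw [Measure.count]; infer_instance

set_option maxHeartbeats 1000000 in
/-- let `π : G → U(H)` be a unitary representation of a second-countable
locally compact group `G`, and `{u_i}_{i∈I}` a countable family whose orbit
`{π(x)u_i}_{x∈G, i∈I}` is a complete Bessel system, with analysis operator
`T : H → L²(G × I)`, `(Tv)(x,i) = ⟨v, π(x)u_i⟩`. Then in the polar decomposition `T = UP`
the partial isometry `U` is a linear isometry onto the closure of the range of `T` which
intertwines `π` with left translation: `(U π(y) v)(x,i) = (U v)(y⁻¹x, i)`. -/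
theorem polar_decomposition_of_analysis_operator_intertwines
    {G : Type*} [Group G] [TopologicalSpace G] [IsTopologicalGroup G]
    [LocallyCompactSpace G] [SecondCountableTopology G]
    [MeasurableSpace G] [BorelSpace G]
    (μ : Measure G) [μ.IsHaarMeasure]
    {H : Type*} [NormedAddCommGroup H] [InnerProductSpace ℂ H] [CompleteSpace H]
    [SecondCountableTopology H]
    {I : Type*} [Countable I] [MeasurableSpace I] [MeasurableSingletonClass I]
    (π : G → (H →L[ℂ] H))
    (hπ_mul : ∀ x y : G, π (x * y) = (π x).comp (π y))
    (hπ_one : π 1 = ContinuousLinearMap.id ℂ H)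
    (hπ_unitary : ∀ x : G, (∀ v, ‖π x v‖ = ‖v‖) ∧ Function.Surjective (π x))
    (hπ_cont : ∀ v : H, Continuous fun x => π x v)
    (u : I → H)
    (hcomplete : (Submodule.span ℂ {w : H | ∃ x i, w = π x (u i)}).topologicalClosure = ⊤)
    (T : H →L[ℂ] Lp ℂ 2 (μ.prod (Measure.count : Measure I)))
    (hT : ∀ v : H, ∀ᵐ p ∂(μ.prod (Measure.count : Measure I)),
      (T v) p = (inner ℂ v (π p.1 (u p.2)) : ℂ))
    (U : H →L[ℂ] Lp ℂ 2 (μ.prod (Measure.count : Measure I)))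
    (P : H →L[ℂ] H)
    (hP_sa : IsSelfAdjoint P)
    (hP_pos : ∀ v : H, 0 ≤ (inner ℂ (P v) v : ℂ).re)
    (hPP : P.comp P = (ContinuousLinearMap.adjoint T).comp T)
    (hUP : T = U.comp P)
    (hUker : ∀ v : H, U v = 0 ↔ P v = 0) :
    (∀ v : H, ‖U v‖ = ‖v‖) ∧
    Set.range U = closure (Set.range T) ∧
    (∀ (y : G) (v : H), ∀ᵐ p ∂(μ.prod (Measure.count : Measure I)),
      (U (π y v)) p = (U v) (y⁻¹ * p.1, p.2)) := by
  classical
  have hsf : SFinite (Measure.count : Measure I) := aux_count_sfinite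
  -- basic representation facts
  have hπ_inv : ∀ (y : G) (v : H), π y⁻¹ (π y v) = v := by
    intro y v
    have h := hπ_mul y⁻¹ y
    rw [inv_mul_cancel, hπ_one] at h
    exact (congrArg (fun (A : H →L[ℂ] H) => A v) h).symm.trans rfl
  have hπ_inv' : ∀ (y : G) (v : H), π y (π y⁻¹ v) = v := by
    intro y v
    have := hπ_inv y⁻¹ v
    rwa [inv_inv] at this
  have hinner : ∀ (x : G) (a b : H), (inner ℂ (π x a) (π x b) : ℂ) = inner ℂ a b := by
    intro x a b
    exact LinearIsometry.inner_map_map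
      ⟨(π x : H →ₗ[ℂ] H), (hπ_unitary x).1⟩ a b
  have hmove : ∀ (y : G) (v w : H), (inner ℂ (π y v) w : ℂ) = inner ℂ v (π y⁻¹ w) := by
    intro y v w
    conv_lhs => rw [← hπ_inv' y w]
    exact hinner y v (π y⁻¹ w)
  have hmove' : ∀ (y : G) (v w : H), (inner ℂ (π y⁻¹ v) w : ℂ) = inner ℂ v (π y w) := by
    intro y v w
    have := hmove y⁻¹ v w
    rwa [inv_inv] at this
  have hadj : ∀ y : G, ContinuousLinearMap.adjoint (π y) = π y⁻¹ := by
    intro y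
    symm
    rw [ContinuousLinearMap.eq_adjoint_iff]
    intro a b
    exact hmove' y a b
  -- injectivity of T
  have hTinj : ∀ v : H, T v = 0 → v = 0 := by
    intro v hv
    have h0 : ∀ᵐ p ∂(μ.prod (Measure.count : Measure I)),
        (inner ℂ v (π p.1 (u p.2)) : ℂ) = 0 := by
      have hz : ⇑(T v) =ᵐ[μ.prod (Measure.count : Measure I)] 0 := by
        rw [hv]; exact Lp.coeFn_zero ℂ 2 _
      filter_upwards [hT v, hz] with p hp1 hp2
      rw [← hp1, hp2]; rfl
    have hae := Measure.ae_ae_of_ae_prod h0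
    have hall : ∀ᵐ x ∂μ, ∀ i, (inner ℂ v (π x (u i)) : ℂ) = 0 := by
      filter_upwards [hae] with x hx
      intro i
      have hx' : (Measure.count : Measure I) {j | ¬ ((inner ℂ v (π x (u j)) : ℂ) = 0)} = 0 :=
        ae_iff.mp hx
      by_contra hne
      have h2 : ({i} : Set I) ⊆ {j | ¬ ((inner ℂ v (π x (u j)) : ℂ) = 0)} := by
        intro j hj
        rcases hj with rfl
        exact hne
      have h3 := (measure_mono h2 : (Measure.count : Measure I) _ ≤ _)
      rw [Measure.count_singleton, hx'] at h3
      exact (by simp at h3 : False)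
    have hzero : ∀ (x : G) (i : I), (inner ℂ v (π x (u i)) : ℂ) = 0 := by
      intro x i
      have hcont : Continuous fun x => (inner ℂ v (π x (u i)) : ℂ) :=
        Continuous.inner continuous_const (hπ_cont (u i))
      have hae' : (fun x => (inner ℂ v (π x (u i)) : ℂ)) =ᵐ[μ] (fun _ => 0) := by
        filter_upwards [hall] with x hx using hx i
      have := (Continuous.ae_eq_iff_eq μ hcont continuous_const).mp hae'
      exact congrFun this x
    have hbot : (Submodule.span ℂ {w : H | ∃ x i, w = π x (u i)})ᗮ = ⊥ :=
      Submodule.topologicalClosure_eq_top_iff.mp hcomplete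
    have hle : Submodule.span ℂ {w : H | ∃ x i, w = π x (u i)} ≤
        LinearMap.ker (innerSL ℂ v : H →ₗ[ℂ] ℂ) := by
      rw [Submodule.span_le]
      rintro w ⟨x, i, rfl⟩
      simpa using hzero x i
    have hv' : v ∈ (Submodule.span ℂ {w : H | ∃ x i, w = π x (u i)})ᗮ := by
      rw [Submodule.mem_orthogonal]
      intro w hw
      have : (inner ℂ v w : ℂ) = 0 := by simpa using hle hw
      exact inner_eq_zero_symm.mp this
    rw [hbot] at hv'
    simpa using hv'
  -- ‖T v‖ = ‖P v‖
  have hTU : ∀ w : H, T w = U (P w) := by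
    intro w; rw [hUP]; rfl
  have hP_adj : ContinuousLinearMap.adjoint P = P := by
    rw [← ContinuousLinearMap.star_eq_adjoint]; exact hP_sa
  have hPPapp : ∀ w : H, P (P w) = ContinuousLinearMap.adjoint T (T w) := by
    intro w
    have := congrArg (fun (A : H →L[ℂ] H) => A w) hPP
    simpa using this
  have hPinner : ∀ v w : H, (inner ℂ (P v) w : ℂ) = inner ℂ v (P w) := by
    intro v w
    have e := ContinuousLinearMap.adjoint_inner_left P w v
    rwa [hP_adj] at e
  have hnormTP : ∀ v : H, ‖T v‖ = ‖P v‖ := by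
    intro v
    have h1 : (inner ℂ (T v) (T v) : ℂ) = inner ℂ (P v) (P v) := by
      have e1 := ContinuousLinearMap.adjoint_inner_left T v (T v)
      rw [← hPPapp v] at e1
      rw [← e1, hPinner (P v) v]
    have h2 : (‖T v‖ ^ 2 : ℝ) = ‖P v‖ ^ 2 := by
      rw [inner_self_eq_norm_sq_to_K, inner_self_eq_norm_sq_to_K] at h1
      exact_mod_cast h1
    nlinarith [norm_nonneg (T v), norm_nonneg (P v)]
  have hPinj : ∀ w : H, P w = 0 → w = 0 := by
    intro w hw
    apply hTinj
    have := hnormTP w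
    rw [hw, norm_zero] at this
    exact norm_eq_zero.mp this
  -- dense range of P
  have hPdense : Dense (Set.range ⇑P) := by
    have htop : (LinearMap.range (P : H →ₗ[ℂ] H)).topologicalClosure = ⊤ := by
      rw [Submodule.topologicalClosure_eq_top_iff, Submodule.eq_bot_iff]
      intro w hw
      have hPw : P w = 0 := by
        have h2 : (inner ℂ (P (P w)) w : ℂ) = 0 :=
          (Submodule.mem_orthogonal _ w).mp hw (P (P w)) ⟨P w, rfl⟩
        have h1 : (inner ℂ (P w) (P w) : ℂ) = 0 := by
          rw [hPinner (P w) w] at h2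
          exact h2
        exact inner_self_eq_zero.mp h1
      exact hPinj w hPw
    have hset := congrArg (fun (S : Submodule ℂ H) => (S : Set H)) htop
    simp only [Submodule.topologicalClosure_coe, Submodule.top_coe] at hset
    rw [dense_iff_closure_eq]
    convert hset using 2
    exact (LinearMap.coe_range (P : H →ₗ[ℂ] H)).symm
  -- U is an isometry
  have hUiso : ∀ v : H, ‖U v‖ = ‖v‖ := by
    have heq : (fun v => ‖U v‖) = fun v => ‖v‖ := by
      apply Continuous.ext_on hPdense
      · exact U.continuous.norm
      · exact continuous_norm
      · rintro _ ⟨w, rfl⟩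
        simp only
        rw [← hTU w]
        exact hnormTP w
    exact fun v => congrFun heq v
  refine ⟨hUiso, ?_, ?_⟩
  · -- range U = closure (range T)
    have hisoU : Isometry ⇑U := AddMonoidHomClass.isometry_of_norm U hUiso
    have hclosedU : IsClosed (Set.range ⇑U) := hisoU.isClosedEmbedding.isClosed_range
    have himg : Set.range ⇑T = ⇑U '' Set.range ⇑P := by
      have hfe : ⇑T = ⇑U ∘ ⇑P := funext hTU
      rw [hfe, Set.range_comp]
    refine Set.Subset.antisymm ?_ ?_
    · rintro _ ⟨v, rfl⟩
      have hv : v ∈ closure (Set.range ⇑P) := by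
        rw [hPdense.closure_eq]; trivial
      have hmem : U v ∈ ⇑U '' closure (Set.range ⇑P) := Set.mem_image_of_mem _ hv
      have := (image_closure_subset_closure_image U.continuous) hmem
      rwa [← himg] at this
    · refine closure_minimal ?_ hclosedU
      rintro _ ⟨w, rfl⟩
      exact ⟨P w, (hTU w).symm⟩
  · -- intertwining
    intro y v
    have hτ : MeasurePreserving (fun p : G × I => (y⁻¹ * p.1, p.2))
        (μ.prod (Measure.count : Measure I)) (μ.prod (Measure.count : Measure I)) :=
      (measurePreserving_mul_left μ y⁻¹).prod (MeasurePreserving.id _)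
    -- T intertwines
    have hTint : ∀ w : H, T (π y w) =
        Lp.compMeasurePreserving (fun p : G × I => (y⁻¹ * p.1, p.2)) hτ (T w) := by
      intro w
      apply Lp.ext
      have h2 := Lp.coeFn_compMeasurePreserving (T w) hτ
      have h3 : (⇑(T w)) ∘ (fun p : G × I => (y⁻¹ * p.1, p.2))
          =ᵐ[μ.prod (Measure.count : Measure I)]
          (fun p : G × I => (inner ℂ w (π p.1 (u p.2)) : ℂ)) ∘
            (fun p : G × I => (y⁻¹ * p.1, p.2)) :=
        hτ.quasiMeasurePreserving.ae_eq_comp (hT w)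
      filter_upwards [hT (π y w), h2, h3] with p hp1 hp2 hp3
      rw [hp1, hp2, hp3]
      simp only [Function.comp_apply]
      rw [hmove y w (π p.1 (u p.2))]
      congr 1
      rw [hπ_mul y⁻¹ p.1]
      rfl
    -- composition operator is ℂ-linear and isometric, so preserves inner products
    have hLy_smul : ∀ (c : ℂ) (f : Lp ℂ 2 (μ.prod (Measure.count : Measure I))),
        Lp.compMeasurePreserving (fun p : G × I => (y⁻¹ * p.1, p.2)) hτ (c • f) =
          c • Lp.compMeasurePreserving (fun p : G × I => (y⁻¹ * p.1, p.2)) hτ f := by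
      intro c f
      apply Lp.ext
      have h1 := Lp.coeFn_compMeasurePreserving (c • f) hτ
      have h2 : ⇑(c • f) =ᵐ[μ.prod (Measure.count : Measure I)] c • ⇑f := Lp.coeFn_smul c f
      have h2' := hτ.quasiMeasurePreserving.ae_eq_comp h2
      have h3 := Lp.coeFn_smul c
        (Lp.compMeasurePreserving (fun p : G × I => (y⁻¹ * p.1, p.2)) hτ f)
      have h4 := Lp.coeFn_compMeasurePreserving f hτ
      filter_upwards [h1, h2', h3, h4] with p hp1 hp2 hp3 hp4
      rw [hp1, hp3]
      have : ((⇑(c • f)) ∘ (fun p : G × I => (y⁻¹ * p.1, p.2))) p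
          = ((c • ⇑f) ∘ (fun p : G × I => (y⁻¹ * p.1, p.2))) p := hp2
      rw [this]
      simp only [Function.comp_apply, Pi.smul_apply]
      rw [hp4]
      rfl
    let LyI : Lp ℂ 2 (μ.prod (Measure.count : Measure I)) →ₗᵢ[ℂ]
        Lp ℂ 2 (μ.prod (Measure.count : Measure I)) :=
      { toFun := fun f => Lp.compMeasurePreserving (fun p : G × I => (y⁻¹ * p.1, p.2)) hτ f
        map_add' := fun f g => map_add _ f g
        map_smul' := fun c f => hLy_smul c f
        norm_map' := fun f => Lp.norm_compMeasurePreserving f hτ }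
    have hLyinner : ∀ f g : Lp ℂ 2 (μ.prod (Measure.count : Measure I)),
        (inner ℂ (Lp.compMeasurePreserving (fun p : G × I => (y⁻¹ * p.1, p.2)) hτ f)
          (Lp.compMeasurePreserving (fun p : G × I => (y⁻¹ * p.1, p.2)) hτ g) : ℂ)
          = inner ℂ f g := fun f g => LyI.inner_map_map f g
    -- P commutes with π y
    have hcomm : ∀ w : H, π y (P w) = P (π y w) := by
      have hA_eq : ((π y⁻¹).comp P).comp (π y) = P := by
        set A : H →L[ℂ] H := ((π y⁻¹).comp P).comp (π y) with hAdef
        have hA_apply : ∀ w, A w = π y⁻¹ (P (π y w)) := fun w => rfl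
        have hA_sa : IsSelfAdjoint A := by
          rw [IsSelfAdjoint, ContinuousLinearMap.star_eq_adjoint, hAdef,
            ContinuousLinearMap.adjoint_comp, ContinuousLinearMap.adjoint_comp,
            hadj, hadj, hP_adj, inv_inv, ContinuousLinearMap.comp_assoc]
        have hP_nonneg : (0 : H →L[ℂ] H) ≤ P := by
          rw [ContinuousLinearMap.nonneg_iff_isPositive]
          refine ⟨ContinuousLinearMap.isSelfAdjoint_iff_isSymmetric.mp hP_sa, fun x => ?_⟩
          rw [ContinuousLinearMap.reApplyInnerSelf_apply]
          simpa using hP_pos x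
        have hA_nonneg : (0 : H →L[ℂ] H) ≤ A := by
          rw [ContinuousLinearMap.nonneg_iff_isPositive]
          refine ⟨ContinuousLinearMap.isSelfAdjoint_iff_isSymmetric.mp hA_sa, fun x => ?_⟩
          rw [ContinuousLinearMap.reApplyInnerSelf_apply]
          have h1 : (inner ℂ (A x) x : ℂ) = inner ℂ (P (π y x)) (π y x) := by
            rw [hA_apply, hmove' y (P (π y x)) x]
          rw [h1]
          simpa using hP_pos (π y x)
        have hA2 : A ^ 2 = P ^ 2 := by
          have hmid : ∀ w, A (A w) = π y⁻¹ (P (P (π y w))) := by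
            intro w
            rw [hA_apply, hA_apply, hπ_inv' y (P (π y w))]
          have hcc : A.comp A = P.comp P := by
            ext w
            apply ext_inner_right ℂ
            intro z
            show (inner ℂ (A (A w)) z : ℂ) = inner ℂ (P (P w)) z
            rw [hmid, hmove' y _ z, hPPapp (π y w), hPPapp w,
              ContinuousLinearMap.adjoint_inner_left,
              ContinuousLinearMap.adjoint_inner_left, hTint w, hTint z, hLyinner]
          calc A ^ 2 = A.comp A := by rw [pow_two]; rfl
            _ = P.comp P := hcc
            _ = P ^ 2 := by rw [pow_two]; rfl
        have hs := CFC.sqrt_sq A hA_nonneg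
        rw [hA2, CFC.sqrt_sq P hP_nonneg] at hs
        exact hs.symm
      intro w
      have h := congrArg (fun (B : H →L[ℂ] H) => π y (B w)) hA_eq
      rw [show π y (((π y⁻¹).comp P).comp (π y) w) = π y (π y⁻¹ (P (π y w))) from rfl,
        hπ_inv' y (P (π y w))] at h
      exact h.symm
    -- conclude: U intertwines
    have hkey : U (π y v) =
        Lp.compMeasurePreserving (fun p : G × I => (y⁻¹ * p.1, p.2)) hτ (U v) := by
      have hfun : (fun w => U (π y w)) = fun w =>
          Lp.compMeasurePreserving (fun p : G × I => (y⁻¹ * p.1, p.2)) hτ (U w) := by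
        apply Continuous.ext_on hPdense
        · exact U.continuous.comp (π y).continuous
        · exact (Lp.isometry_compMeasurePreserving hτ).continuous.comp U.continuous
        · rintro _ ⟨w, rfl⟩
          simp only
          rw [hcomm w, ← hTU (π y w), hTint w, hTU w]
      exact congrFun hfun v
    filter_upwards [Lp.coeFn_compMeasurePreserving (U v) hτ] with p hp
    rw [hkey]
    exact hp
end
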